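/- Let $E, F$ be Riesz spaces, $T : E \to F$ a disjointness preserving orthogonally additive operator, and let $x, y \in E$ be laterally bounded by a common element $e$ (i.e., $x \sqsubseteq e$ and $y \sqsubseteq e$). Then $(T(x))^+ \wedge (T(y))^- = 0$. -/

import Mathlib

/-- Disjointness in a Riesz space: `|x| ⊓ |y| = 0`. -/
def RDisjoint {E : Type*} [Lattice E] [AddCommGroup E] (x y : E) : Prop :=
  |x| ⊓ |y| = 0

/-- `x` is a fragment of `e` (lateral order `x ⊑ e`): `x ⊥ (e - x)`. -/
def IsFragment {E : Type*} [Lattice E] [AddCommGroup E] (x e : E) : Prop :=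
  RDisjoint x (e - x)

/-- An orthogonally additive operator. -/
def IsOAO {E F : Type*} [Lattice E] [AddCommGroup E] [Lattice F] [AddCommGroup F]
    (T : E → F) : Prop :=
  ∀ x y : E, RDisjoint x y → T (x + y) = T x + T y

/-!
Fragments of `e` split into a fragment of `e⁺` minus a fragment of `e⁻`, and on the positive
element `e⁺` the infimum of two fragments is again a fragment of each. Hence two fragments
`x, y` of `e` have the common fragment `z = x⁺ ⊓ y⁺ - x⁻ ⊓ y⁻`, and `x - z`, `y - z` are
disjoint. Orthogonal additivity writes `T x = T z + T (x - z)` and `T y = T z + T (y - z)` with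
pairwise disjoint summands, so `(T x)⁺ = (T z)⁺ + (T (x - z))⁺` and
`(T y)⁻ = (T z)⁻ + (T (y - z))⁻`, and each of the four infima of summands vanishes.
-/

section LatticeOrderedGroup

variable {G : Type*} [Lattice G] [AddCommGroup G] {a b c d u v : G}

theorem RDisjoint.symm (h : RDisjoint a b) : RDisjoint b a := by
  rwa [RDisjoint, inf_comm]

theorem RDisjoint.neg_left (h : RDisjoint a b) : RDisjoint (-a) b := by
  rwa [RDisjoint, abs_neg]

theorem IsFragment.compl (h : IsFragment a u) : IsFragment (u - a) u := by
  rw [IsFragment, sub_sub_cancel]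
  exact h.symm

theorem IsFragment.neg (h : IsFragment a u) : IsFragment (-a) (-u) := by
  rw [IsFragment, show -u - -a = -(u - a) by abel]
  exact h.neg_left.symm.neg_left.symm

variable [CovariantClass G G (· + ·) (· ≤ ·)]

theorem inf_add_le_inf_add_inf (ha : 0 ≤ a) (hb : 0 ≤ b) (hc : 0 ≤ c) :
    a ⊓ (b + c) ≤ a ⊓ b + a ⊓ c := by
  rw [inf_add, add_inf, add_inf, inf_inf_inf_comm]
  refine le_inf (le_inf ?_ ?_) (le_inf ?_ inf_le_right)
  · exact inf_le_left.trans (le_add_of_nonneg_right ha)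
  · exact inf_le_left.trans (le_add_of_nonneg_left hb)
  · exact inf_le_left.trans (le_add_of_nonneg_right hc)

theorem rdisjoint_iff_inf_eq_zero (ha : 0 ≤ a) (hb : 0 ≤ b) :
    RDisjoint a b ↔ a ⊓ b = 0 := by
  rw [RDisjoint, abs_of_nonneg ha, abs_of_nonneg hb]

theorem RDisjoint.mono (h : RDisjoint a b) (hc : |c| ≤ |a|) (hd : |d| ≤ |b|) : RDisjoint c d :=
  le_antisymm (h ▸ inf_le_inf hc hd) (le_inf (abs_nonneg c) (abs_nonneg d))

theorem RDisjoint.add_left (ha : RDisjoint a c) (hb : RDisjoint b c) : RDisjoint (a + b) c := by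
  refine le_antisymm ?_ (le_inf (abs_nonneg _) (abs_nonneg _))
  calc |a + b| ⊓ |c| ≤ |c| ⊓ (|a| + |b|) := by
        rw [inf_comm]; exact inf_le_inf_left _ (abs_add_le a b)
    _ ≤ |c| ⊓ |a| + |c| ⊓ |b| :=
        inf_add_le_inf_add_inf (abs_nonneg c) (abs_nonneg a) (abs_nonneg b)
    _ = 0 := by rw [inf_comm, ha, inf_comm, hb, add_zero]

theorem RDisjoint.sub_left (ha : RDisjoint a c) (hb : RDisjoint b c) : RDisjoint (a - b) c :=
  sub_eq_add_neg a b ▸ ha.add_left hb.neg_left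

theorem RDisjoint.add_add (hac : RDisjoint a c) (had : RDisjoint a d) (hbc : RDisjoint b c)
    (hbd : RDisjoint b d) : RDisjoint (a + b) (c + d) :=
  ((hac.add_left hbc).symm.add_left (had.add_left hbd).symm).symm

theorem RDisjoint.sub_sub (hac : RDisjoint a c) (had : RDisjoint a d) (hbc : RDisjoint b c)
    (hbd : RDisjoint b d) : RDisjoint (a - b) (c - d) :=
  ((hac.sub_left hbc).symm.sub_left (had.sub_left hbd).symm).symm

theorem rdisjoint_posPart_negPart (a : G) : RDisjoint a⁺ a⁻ :=
  (rdisjoint_iff_inf_eq_zero (posPart_nonneg a) (negPart_nonneg a)).2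
    (posPart_inf_negPart_eq_zero a)

theorem abs_posPart_le_abs (a : G) : |a⁺| ≤ |a| := by
  rw [abs_of_nonneg (posPart_nonneg a), ← posPart_add_negPart]
  exact le_add_of_nonneg_right (negPart_nonneg a)

theorem abs_negPart_le_abs (a : G) : |a⁻| ≤ |a| := by
  rw [abs_of_nonneg (negPart_nonneg a), ← posPart_add_negPart]
  exact le_add_of_nonneg_left (posPart_nonneg a)

theorem posPart_sub_of_inf_eq_zero (h : u ⊓ v = 0) : (u - v)⁺ = u := by
  have hsup : u ⊔ v = u + v := by rw [← inf_add_sup u v, h, zero_add]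
  rw [posPart_def, ← sub_self v, ← sup_sub, hsup, add_sub_cancel_right]

theorem RDisjoint.posPart_add (h : RDisjoint a b) : (a + b)⁺ = a⁺ + b⁺ := by
  have hparts : RDisjoint (a⁺ + b⁺) (a⁻ + b⁻) := by
    refine RDisjoint.add_add (rdisjoint_posPart_negPart a) ?_ ?_ (rdisjoint_posPart_negPart b)
    · exact h.mono (abs_posPart_le_abs a) (abs_negPart_le_abs b)
    · exact h.symm.mono (abs_posPart_le_abs b) (abs_negPart_le_abs a)
  have hsum : a + b = (a⁺ + b⁺) - (a⁻ + b⁻) := by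
    conv_lhs => rw [← posPart_sub_negPart a, ← posPart_sub_negPart b]
    abel
  rw [hsum, posPart_sub_of_inf_eq_zero]
  exact (rdisjoint_iff_inf_eq_zero (by positivity) (by positivity)).1 hparts

theorem RDisjoint.negPart_add (h : RDisjoint a b) : (a + b)⁻ = a⁻ + b⁻ := by
  rw [← posPart_neg, neg_add, h.neg_left.symm.neg_left.symm.posPart_add, posPart_neg, posPart_neg]

theorem RDisjoint.abs_add (h : RDisjoint a b) : |a + b| = |a| + |b| := by
  rw [← posPart_add_negPart, h.posPart_add, h.negPart_add, ← posPart_add_negPart a,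
    ← posPart_add_negPart b]
  abel

theorem posPart_add_inf_negPart_add (hab : RDisjoint a b) (hac : RDisjoint a c)
    (hbc : RDisjoint b c) : (a + b)⁺ ⊓ (a + c)⁻ = 0 := by
  rw [hab.posPart_add, hac.negPart_add,
    ← rdisjoint_iff_inf_eq_zero (by positivity) (by positivity)]
  refine RDisjoint.add_add (rdisjoint_posPart_negPart a) ?_ ?_ ?_
  · exact hac.mono (abs_posPart_le_abs a) (abs_negPart_le_abs c)
  · exact hab.symm.mono (abs_posPart_le_abs b) (abs_negPart_le_abs a)
  · exact hbc.mono (abs_posPart_le_abs b) (abs_negPart_le_abs c)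

theorem rdisjoint_sub_inf_sub_inf (a b : G) : RDisjoint (a - a ⊓ b) (b - a ⊓ b) := by
  rw [rdisjoint_iff_inf_eq_zero (sub_nonneg.2 inf_le_left) (sub_nonneg.2 inf_le_right),
    ← inf_sub, sub_self]

theorem IsFragment.abs_le (h : IsFragment a u) : |a| ≤ |u| := by
  have hu : |u| = |a| + |u - a| := by rw [← RDisjoint.abs_add h, add_sub_cancel]
  exact hu ▸ le_add_of_nonneg_right (abs_nonneg _)

theorem IsFragment.abs_sub_le (h : IsFragment a u) : |u - a| ≤ |u| :=
  h.compl.abs_le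

theorem IsFragment.posPart (h : IsFragment a u) : IsFragment a⁺ u⁺ := by
  have hu : u⁺ = a⁺ + (u - a)⁺ := by rw [← RDisjoint.posPart_add h, add_sub_cancel]
  rw [IsFragment, hu, add_sub_cancel_left]
  exact h.mono (abs_posPart_le_abs a) (abs_posPart_le_abs _)

theorem IsFragment.negPart (h : IsFragment a u) : IsFragment a⁻ u⁻ := by
  simpa only [posPart_neg] using h.neg.posPart

theorem IsFragment.nonneg (h : IsFragment a u) (hu : 0 ≤ u) : 0 ≤ a := by
  have hneg : a⁻ + (u - a)⁻ = 0 := by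
    rw [← RDisjoint.negPart_add h, add_sub_cancel, negPart_eq_zero.2 hu]
  rw [← negPart_eq_zero]
  exact ((add_eq_zero_iff_of_nonneg (negPart_nonneg _) (negPart_nonneg _)).1 hneg).1

theorem IsFragment.le (h : IsFragment a u) (hu : 0 ≤ u) : a ≤ u :=
  sub_nonneg.1 (h.compl.nonneg hu)

theorem IsFragment.inf (ha : IsFragment a u) (hb : IsFragment b u) (hu : 0 ≤ u) :
    IsFragment (a ⊓ b) a := by
  have hab : 0 ≤ a ⊓ b := le_inf (ha.nonneg hu) (hb.nonneg hu)
  have hcompl : a - a ⊓ b ≤ u - b := by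
    rw [sub_inf, sub_self]
    exact sup_le (sub_nonneg.2 (hb.le hu)) (sub_le_sub_right (ha.le hu) b)
  refine RDisjoint.mono hb ?_ ?_
  · rw [abs_of_nonneg hab, abs_of_nonneg (hb.nonneg hu)]
    exact inf_le_right
  · rw [abs_of_nonneg (sub_nonneg.2 inf_le_left)]
    exact hcompl.trans (le_abs_self _)

theorem IsFragment.sub (ha : IsFragment a u) (hb : IsFragment b v) (huv : RDisjoint u v) :
    IsFragment (a - b) (u - v) := by
  rw [IsFragment, show u - v - (a - b) = (u - a) - (v - b) by abel]
  exact RDisjoint.sub_sub ha (huv.mono ha.abs_le hb.abs_sub_le)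
    (huv.symm.mono hb.abs_le ha.abs_sub_le) hb

theorem IsFragment.exists_common {x y e : G} (hx : IsFragment x e) (hy : IsFragment y e) :
    ∃ z, IsFragment z x ∧ IsFragment z y ∧ RDisjoint (x - z) (y - z) := by
  have hmx : IsFragment (x⁺ ⊓ y⁺) x⁺ := hx.posPart.inf hy.posPart (posPart_nonneg e)
  have hmy : IsFragment (x⁺ ⊓ y⁺) y⁺ :=
    inf_comm y⁺ x⁺ ▸ hy.posPart.inf hx.posPart (posPart_nonneg e)
  have hnx : IsFragment (x⁻ ⊓ y⁻) x⁻ := hx.negPart.inf hy.negPart (negPart_nonneg e)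
  have hny : IsFragment (x⁻ ⊓ y⁻) y⁻ :=
    inf_comm y⁻ x⁻ ▸ hy.negPart.inf hx.negPart (negPart_nonneg e)
  refine ⟨x⁺ ⊓ y⁺ - x⁻ ⊓ y⁻, ?_, ?_, ?_⟩
  · simpa only [posPart_sub_negPart] using hmx.sub hnx (rdisjoint_posPart_negPart x)
  · simpa only [posPart_sub_negPart] using hmy.sub hny (rdisjoint_posPart_negPart y)
  · have hsplit (w : G) :
        w - (x⁺ ⊓ y⁺ - x⁻ ⊓ y⁻) = (w⁺ - x⁺ ⊓ y⁺) - (w⁻ - x⁻ ⊓ y⁻) := by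
      conv_lhs => rw [← posPart_sub_negPart w]
      abel
    have he : RDisjoint e⁺ e⁻ := rdisjoint_posPart_negPart e
    rw [hsplit, hsplit]
    exact RDisjoint.sub_sub (rdisjoint_sub_inf_sub_inf _ _)
      (he.mono (hmx.abs_sub_le.trans hx.posPart.abs_le) (hny.abs_sub_le.trans hy.negPart.abs_le))
      (he.symm.mono (hnx.abs_sub_le.trans hx.negPart.abs_le)
        (hmy.abs_sub_le.trans hy.posPart.abs_le))
      (rdisjoint_sub_inf_sub_inf _ _)

end LatticeOrderedGroup

theorem IsOAO.apply_eq_add_of_isFragment {E F : Type*} [Lattice E] [AddCommGroup E] [Lattice F]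
    [AddCommGroup F] {T : E → F} (hT : IsOAO T) {z x : E} (h : IsFragment z x) :
    T x = T z + T (x - z) := by
  rw [← hT z (x - z) h, add_sub_cancel]

variable {E F : Type*}
  [Lattice E] [AddCommGroup E] [CovariantClass E E (· + ·) (· ≤ ·)]
  [Lattice F] [AddCommGroup F] [CovariantClass F F (· + ·) (· ≤ ·)]

/-- Analogue of Meyer's lemma for OAOs: for laterally bounded `x, y`,
`(T x)⁺ ∧ (T y)⁻ = 0`. -/
theorem meyer_lemma_for_oao (T : E → F)
    (hT : IsOAO T)
    (hd : ∀ x y : E, RDisjoint x y → RDisjoint (T x) (T y))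
    (x y e : E) (hx : IsFragment x e) (hy : IsFragment y e) :
    (T x)⁺ ⊓ (T y)⁻ = 0 := by
  obtain ⟨z, hzx, hzy, hxy⟩ := hx.exists_common hy
  rw [hT.apply_eq_add_of_isFragment hzx, hT.apply_eq_add_of_isFragment hzy]
  exact posPart_add_inf_negPart_add (hd _ _ hzx) (hd _ _ hzy) (hd _ _ hxy)
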